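/- There exist arbitrarily large graphs G with strict majority thresholds such that the minimum size of an ordinary target set in the non-progressive model is Ω(n) while the minimum size of a disjoint timed target set is O(√n); in particular, the minimally required target set size is ω of the minimum disjoint timed target set size. -/

import Mathlib

open Finset
open scoped Classical

variable {V : Type*}

noncomputable def Qseq (G : SimpleGraph V) [Fintype V] (τ : V → ℕ) (S : ℕ → Finset V) :
    ℕ → Finset V
  | 0 => ∅
  | i + 1 => Finset.univ.filter fun v =>
      τ v ≤ (G.neighborFinset v ∩ (S i ∪ Qseq G τ S i)).card

def IsTTS (G : SimpleGraph V) [Fintype V] (τ : V → ℕ) (S : ℕ → Finset V) (k : ℕ) : Prop :=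
  S k = ∅ ∧ Qseq G τ S k = Finset.univ

def ttsSize (S : ℕ → Finset V) (k : ℕ) : ℕ := ∑ i ∈ Finset.range (k + 1), (S i).card

noncomputable def strictMaj (G : SimpleGraph V) [Fintype V] (v : V) : ℕ := (G.degree v + 2) / 2

noncomputable def npStep (G : SimpleGraph V) [Fintype V] (τ : V → ℕ) (A : Finset V) : Finset V :=
  Finset.univ.filter fun v => τ v ≤ (G.neighborFinset v ∩ A).card

def IsTS (G : SimpleGraph V) [Fintype V] (τ : V → ℕ) (S : Finset V) : Prop :=
  ∃ i : ℕ, (npStep G τ)^[i] S = Finset.univ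

noncomputable def MTT (G : SimpleGraph V) [Fintype V] (τ : V → ℕ) : ℕ :=
  sInf {m | ∃ (S : ℕ → Finset V) (k : ℕ), IsTTS G τ S k ∧ ttsSize S k = m}

/-- Vertex type of the tower graph: levels `L_1, …, L_κ` with `|L_i| = i`
(a pair `⟨i, j⟩` with `i : Fin κ` encodes the `j`-th node of level `L_{i+1}`),
plus two extra leaf nodes. -/
def towerV (κ : ℕ) : Type := (Σ i : Fin κ, Fin (i + 1)) ⊕ Fin 2

instance (κ : ℕ) : Fintype (towerV κ) := by unfold towerV; infer_instance

/-- The level of a vertex: level nodes of `L_i` have level `i ∈ {1, …, κ}`, and the two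
leaves have level `0`. -/
def lev {κ : ℕ} : towerV κ → ℕ
  | Sum.inl x => (x.1 : ℕ) + 1
  | Sum.inr _ => 0

/-- The tower graph `G_κ`: each node of `L_i` is adjacent to every node of `L_{i+1}`,
and the two leaves (level `0`) are adjacent exactly to the unique node of `L_1`. -/
def towerGraph (κ : ℕ) : SimpleGraph (towerV κ) where
  Adj a b := lev a + 1 = lev b ∨ lev b + 1 = lev a
  symm := ⟨fun a b h => h.symm⟩
  loopless := ⟨by
    intro a h
    rcases h with h | h <;> omega⟩

/-- The set `L_i` of nodes of level `i` (for `i = 0` this is the pair of leaves). -/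
noncomputable def levelSet (κ : ℕ) (i : ℕ) : Finset (towerV κ) :=
  Finset.univ.filter fun v => lev v = i

/-- A disjoint timed target set: a timed target set whose targeted sets
`S_0, …, S_k` are pairwise disjoint. -/
def IsDTTS (G : SimpleGraph V) [Fintype V] (τ : V → ℕ) (S : ℕ → Finset V) (k : ℕ) : Prop :=
  IsTTS G τ S k ∧
    ∀ i ∈ Finset.range (k + 1), ∀ j ∈ Finset.range (k + 1), i ≠ j → Disjoint (S i) (S j)

/-- Minimum size of a disjoint timed target set. -/
noncomputable def MDTT (G : SimpleGraph V) [Fintype V] (τ : V → ℕ) : ℕ :=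
  sInf {m | ∃ (S : ℕ → Finset V) (k : ℕ), IsDTTS G τ S k ∧ ttsSize S k = m}

/-- Minimum size of an ordinary target set in the non-progressive model. -/
noncomputable def MT (G : SimpleGraph V) [Fintype V] (τ : V → ℕ) : ℕ :=
  sInf {m | ∃ S : Finset V, IsTS G τ S ∧ S.card = m}

/-! In `G_κ` all vertices of a level have the same neighbourhood, so every step of the
non-progressive dynamics produces a union of levels; and a union of levels whose successor
is everything is everything already, since each level is forced by a neighbouring level. Hence a
target set `S` works only if its very first step activates all vertices. A vertex of
level `ℓ` with `2 ≤ ℓ < κ` then needs `ℓ + 1` members of `S` in the levels `ℓ ± 1`, and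
summing over `ℓ` gives `4 |S| ≥ (κ - 2) (κ + 3)`.

A disjoint timed target set can instead target `L_κ` at time `0` and `L_{κ-1}` at time `2`: from
then on the two top levels sustain each other and the activation sweeps down one level per step.
Targeting one leaf at time `κ` and the other at time `κ + 1` activates `L_1` and then the leaves,
for a total size of `2κ + 1`. -/

lemma Function.apply_eq_of_iterate_eq {α : Type*} {f : α → α} {a : α} (hfix : f a = a)
    (hpre : ∀ y, f (f y) = a → f y = a) : ∀ (n : ℕ) (x : α), f^[n] x = a → f x = a
  | 0, _, h => h ▸ hfix
  | n + 1, x, h => hpre x (Function.apply_eq_of_iterate_eq hfix hpre n (f x) h)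

namespace NonProgressive

variable {G : SimpleGraph V} [Fintype V] {τ : V → ℕ}

@[simp]
lemma mem_npStep {A : Finset V} {v : V} :
    v ∈ npStep G τ A ↔ τ v ≤ #(G.neighborFinset v ∩ A) := by
  simp [npStep]

lemma mem_npStep_of_subset {A X : Finset V} {v : V} (hXv : X ⊆ G.neighborFinset v)
    (hXA : X ⊆ A) (hτ : τ v ≤ #X) : v ∈ npStep G τ A :=
  mem_npStep.2 (hτ.trans (card_le_card (subset_inter hXv hXA)))

lemma mem_npStep_strictMaj_congr {A : Finset V} {v w : V}
    (h : G.neighborFinset v = G.neighborFinset w) :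
    v ∈ npStep G (strictMaj G) A ↔ w ∈ npStep G (strictMaj G) A := by
  simp only [mem_npStep, strictMaj, ← SimpleGraph.card_neighborFinset_eq_degree, h]

lemma exists_isTS_card_eq_MT : ∃ S, IsTS G τ S ∧ #S = MT G τ :=
  Nat.sInf_mem (s := {m | ∃ S, IsTS G τ S ∧ #S = m}) ⟨_, univ, ⟨0, rfl⟩, rfl⟩

lemma MDTT_le {S : ℕ → Finset V} {k : ℕ} (h : IsDTTS G τ S k) : MDTT G τ ≤ ttsSize S k :=
  Nat.sInf_le ⟨S, k, h, rfl⟩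

def timeSchedule (t : V → ℕ) (i : ℕ) : Finset V := univ.filter (t · = i)

@[simp]
lemma mem_timeSchedule {t : V → ℕ} {i : ℕ} {v : V} : v ∈ timeSchedule t i ↔ t v = i := by
  simp [timeSchedule]

lemma disjoint_timeSchedule (t : V → ℕ) {i j : ℕ} (h : i ≠ j) :
    Disjoint (timeSchedule t i) (timeSchedule t j) := by
  simp only [timeSchedule, disjoint_filter]
  exact fun _ _ hi hj => h (hi ▸ hj)

lemma ttsSize_timeSchedule (t : V → ℕ) (k : ℕ) :
    ttsSize (timeSchedule t) k = #(univ.filter (t · ≤ k)) := by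
  rw [card_eq_sum_card_fiberwise (f := t) (t := range (k + 1)) fun v hv => by
    simpa [Nat.lt_succ_iff] using hv]
  refine sum_congr rfl fun i hi => ?_
  rw [filter_filter, timeSchedule]
  refine congrArg card (filter_congr fun v _ => ?_)
  rw [mem_range] at hi
  omega

end NonProgressive

namespace Tower

open NonProgressive

variable {κ : ℕ}

section Levels

def leaf (κ : ℕ) (b : Fin 2) : towerV κ := Sum.inr b

@[simp]
lemma lev_leaf (b : Fin 2) : lev (leaf κ b) = 0 := rfl

@[simp]
lemma mem_levelSet {v : towerV κ} {j : ℕ} : v ∈ levelSet κ j ↔ lev v = j := by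
  simp [levelSet]

lemma lev_le (v : towerV κ) : lev v ≤ κ := by
  rcases v with ⟨i, _⟩ | _
  · exact i.2
  · exact Nat.zero_le _

lemma exists_lev_eq {j : ℕ} (hj : j ≤ κ) : ∃ v : towerV κ, lev v = j := by
  rcases j with _ | j
  · exact ⟨leaf κ 0, rfl⟩
  · exact ⟨Sum.inl ⟨⟨j, hj⟩, 0⟩, rfl⟩

lemma disjoint_levelSet {i j : ℕ} (h : i ≠ j) : Disjoint (levelSet κ i) (levelSet κ j) := by
  simp only [levelSet, disjoint_filter]
  exact fun _ _ hi hj => h (hi ▸ hj)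

lemma card_levelSet_zero : #(levelSet κ 0) = 2 := by
  refine (card_bij (s := univ) (fun b _ => leaf κ b) (fun _ _ => mem_levelSet.2 rfl)
    (fun _ _ _ _ h => Sum.inr_injective h) fun v hv => ?_).symm.trans (by simp)
  have hv : lev v = 0 := mem_levelSet.1 hv
  rcases v with ⟨i, a⟩ | b
  · exact absurd hv (Nat.succ_ne_zero i)
  · exact ⟨b, mem_univ _, rfl⟩

lemma card_levelSet {j : ℕ} (h1 : 1 ≤ j) (h2 : j ≤ κ) : #(levelSet κ j) = j := by
  obtain ⟨i, rfl⟩ := Nat.exists_eq_add_of_le' h1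
  refine (card_bij (s := univ) (fun a _ => (Sum.inl ⟨⟨i, h2⟩, a⟩ : towerV κ))
    (fun _ _ => mem_levelSet.2 rfl) (fun _ _ _ _ h => by simpa using h)
    fun v hv => ?_).symm.trans (by simp)
  have hv : lev v = i + 1 := mem_levelSet.1 hv
  rcases v with ⟨⟨i', hi'⟩, a⟩ | b
  · obtain rfl : i' = i := Nat.succ_injective hv
    exact ⟨a, mem_univ _, rfl⟩
  · exact absurd hv (Nat.succ_ne_zero i).symm

lemma levelSet_eq_empty {j : ℕ} (h : κ < j) : levelSet κ j = ∅ :=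
  filter_eq_empty_iff.2 fun v _ => by have := lev_le v; omega

lemma mem_neighborFinset {v u : towerV κ} :
    u ∈ (towerGraph κ).neighborFinset v ↔ lev u + 1 = lev v ∨ lev u = lev v + 1 := by
  rw [SimpleGraph.mem_neighborFinset]
  exact or_comm.trans (by omega)

lemma neighborFinset_eq_of_lev_eq {v w : towerV κ} (h : lev v = lev w) :
    (towerGraph κ).neighborFinset v = (towerGraph κ).neighborFinset w := by
  ext u
  simp only [mem_neighborFinset, h]

lemma neighborFinset_of_lev_pos {v : towerV κ} (h : 1 ≤ lev v) :
    (towerGraph κ).neighborFinset v = levelSet κ (lev v - 1) ∪ levelSet κ (lev v + 1) := by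
  ext u
  simp only [mem_neighborFinset, mem_union, mem_levelSet]
  omega

lemma neighborFinset_of_lev_eq_zero {v : towerV κ} (h : lev v = 0) :
    (towerGraph κ).neighborFinset v = levelSet κ 1 := by
  ext u
  simp only [mem_neighborFinset, mem_levelSet]
  omega

lemma card_neighborFinset_inter {v : towerV κ} (h : 1 ≤ lev v) (A : Finset (towerV κ)) :
    #((towerGraph κ).neighborFinset v ∩ A)
      = #(levelSet κ (lev v - 1) ∩ A) + #(levelSet κ (lev v + 1) ∩ A) := by
  rw [neighborFinset_of_lev_pos h, union_inter_distrib_right, card_union_of_disjoint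
    ((disjoint_levelSet (by omega)).mono inter_subset_left inter_subset_left)]

lemma degree_of_lev_pos {v : towerV κ} (h : 1 ≤ lev v) :
    (towerGraph κ).degree v = #(levelSet κ (lev v - 1)) + #(levelSet κ (lev v + 1)) := by
  simpa using card_neighborFinset_inter h univ

end Levels

section Thresholds

lemma strictMaj_of_lev_eq_zero {v : towerV κ} (h : lev v = 0) (hκ : 1 ≤ κ) :
    strictMaj (towerGraph κ) v = 1 := by
  rw [strictMaj, ← SimpleGraph.card_neighborFinset_eq_degree, neighborFinset_of_lev_eq_zero h,
    card_levelSet le_rfl hκ]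

lemma strictMaj_of_lev_eq_one {v : towerV κ} (h : lev v = 1) (hκ : 2 ≤ κ) :
    strictMaj (towerGraph κ) v = 3 := by
  rw [strictMaj, degree_of_lev_pos h.ge, h, card_levelSet_zero,
    card_levelSet (j := 1 + 1) one_le_two hκ]

lemma strictMaj_of_lev_lt {v : towerV κ} (h2 : 2 ≤ lev v) (hκ : lev v < κ) :
    strictMaj (towerGraph κ) v = lev v + 1 := by
  rw [strictMaj, degree_of_lev_pos (by omega), card_levelSet (by omega) (by omega),
    card_levelSet (by omega) hκ]
  omega

lemma strictMaj_of_lev_eq {v : towerV κ} (h : lev v = κ) (hκ : 2 ≤ κ) :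
    strictMaj (towerGraph κ) v = (κ + 1) / 2 := by
  rw [strictMaj, degree_of_lev_pos (by omega), h, card_levelSet (by omega) (by omega),
    levelSet_eq_empty (Nat.lt_succ_self κ), card_empty]
  omega

lemma mem_npStep_iff_of_lev_eq {A : Finset (towerV κ)} {v w : towerV κ} (h : lev v = lev w) :
    v ∈ npStep (towerGraph κ) (strictMaj (towerGraph κ)) A ↔
      w ∈ npStep (towerGraph κ) (strictMaj (towerGraph κ)) A :=
  mem_npStep_strictMaj_congr (neighborFinset_eq_of_lev_eq h)

lemma npStep_univ (hκ : 1 ≤ κ) :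
    npStep (towerGraph κ) (strictMaj (towerGraph κ)) univ = univ := by
  refine eq_univ_of_forall fun v => ?_
  obtain ⟨u, hu⟩ := exists_lev_eq (κ := κ) (j := if lev v = 0 then 1 else lev v - 1)
    (by have := lev_le v; split_ifs <;> omega)
  have hadj : (towerGraph κ).Adj v u := by
    change _ ∨ _
    split_ifs at hu <;> omega
  have hdeg := (towerGraph κ).degree_pos_iff_exists_adj v |>.2 ⟨u, hadj⟩
  rw [mem_npStep, inter_univ, SimpleGraph.card_neighborFinset_eq_degree, strictMaj]
  omega

end Thresholds

section LowerBound

lemma levelSet_inter_nonempty_of_npStep_eq_univ (hκ : 2 ≤ κ) {B : Finset (towerV κ)}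
    (hB : npStep (towerGraph κ) (strictMaj (towerGraph κ)) B = univ) {j : ℕ} (hj : j ≤ κ) :
    (levelSet κ j ∩ B).Nonempty := by
  have active (w : towerV κ) :
      strictMaj (towerGraph κ) w ≤ #((towerGraph κ).neighborFinset w ∩ B) :=
    mem_npStep.1 (hB ▸ mem_univ w)
  obtain ⟨w₁, hw₁⟩ := exists_lev_eq (κ := κ) (j := 1) (by omega)
  have h₁ := active w₁
  rw [strictMaj_of_lev_eq_one hw₁ hκ, card_neighborFinset_inter hw₁.ge, hw₁] at h₁
  norm_num at h₁
  have hL₂ := card_le_card (inter_subset_left (s₁ := levelSet κ 2) (s₂ := B))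
  have hL₀ := card_le_card (inter_subset_left (s₁ := levelSet κ 0) (s₂ := B))
  rw [card_levelSet one_le_two hκ] at hL₂
  rw [card_levelSet_zero] at hL₀
  rw [← card_pos]
  match j, hj with
  | 0, _ => omega
  | 1, _ =>
    simpa [strictMaj_of_lev_eq_zero (lev_leaf 0) (by omega),
      neighborFinset_of_lev_eq_zero (lev_leaf 0)] using active (leaf κ 0)
  | 2, _ => omega
  | j + 3, hj =>
    obtain ⟨w, hw⟩ := exists_lev_eq (κ := κ) (j := j + 2) (by omega)
    have h := active w
    have hL := card_le_card (inter_subset_left (s₁ := levelSet κ (j + 1)) (s₂ := B))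
    rw [strictMaj_of_lev_lt (by omega) (by omega), card_neighborFinset_inter (by omega), hw,
      show j + 2 - 1 = j + 1 by omega, show j + 2 + 1 = j + 3 from rfl] at h
    rw [card_levelSet (j := j + 1) (by omega) (by omega)] at hL
    omega

lemma eq_univ_of_npStep_eq_univ (hκ : 2 ≤ κ) {B : Finset (towerV κ)}
    (hB : ∀ v w, lev v = lev w → v ∈ B → w ∈ B)
    (h : npStep (towerGraph κ) (strictMaj (towerGraph κ)) B = univ) : B = univ := by
  refine eq_univ_of_forall fun v => ?_
  obtain ⟨u, hu⟩ := levelSet_inter_nonempty_of_npStep_eq_univ hκ h (lev_le v)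
  rw [mem_inter, mem_levelSet] at hu
  exact hB u v hu.1 hu.2

lemma npStep_eq_univ_of_isTS (hκ : 2 ≤ κ) {S : Finset (towerV κ)}
    (hS : IsTS (towerGraph κ) (strictMaj (towerGraph κ)) S) :
    npStep (towerGraph κ) (strictMaj (towerGraph κ)) S = univ := by
  obtain ⟨n, hn⟩ := hS
  exact Function.apply_eq_of_iterate_eq (npStep_univ (by omega))
    (fun A hA => eq_univ_of_npStep_eq_univ hκ (fun _ _ h => (mem_npStep_iff_of_lev_eq h).1) hA)
    n S hn

lemma sum_card_levelSet_inter_le {f : ℕ → ℕ} (hf : Function.Injective f) (I : Finset ℕ)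
    (S : Finset (towerV κ)) : ∑ ℓ ∈ I, #(levelSet κ (f ℓ) ∩ S) ≤ #S := by
  rw [← card_biUnion fun a _ b _ hab =>
    (disjoint_levelSet (hf.ne hab)).mono inter_subset_left inter_subset_left]
  exact card_le_card (biUnion_subset.2 fun _ _ => inter_subset_right)

lemma card_le_of_npStep_eq_univ {S : Finset (towerV κ)}
    (h : npStep (towerGraph κ) (strictMaj (towerGraph κ)) S = univ) :
    (κ - 2) * (κ + 3) ≤ 4 * #S := by
  have key : ∀ ℓ ∈ range (κ - 2),
      ℓ + 3 ≤ #(levelSet κ (ℓ + 1) ∩ S) + #(levelSet κ (ℓ + 3) ∩ S) := by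
    intro ℓ hℓ
    rw [mem_range] at hℓ
    obtain ⟨w, hw⟩ := exists_lev_eq (κ := κ) (j := ℓ + 2) (by omega)
    have hact := mem_npStep.1 (h ▸ mem_univ w)
    rwa [strictMaj_of_lev_lt (by omega) (by omega), card_neighborFinset_inter (by omega), hw]
      at hact
  have gauss (n : ℕ) : (∑ ℓ ∈ range n, (ℓ + 3)) * 2 = n * (n + 5) := by
    induction n with
    | zero => rfl
    | succ n ih => rw [sum_range_succ, add_mul, ih]; ring
  have hsum := (sum_le_sum key).trans_eq sum_add_distrib
  have h₁ := sum_card_levelSet_inter_le (add_left_injective 1) (range (κ - 2)) S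
  have h₃ := sum_card_levelSet_inter_le (add_left_injective 3) (range (κ - 2)) S
  rcases Nat.lt_or_ge κ 2 with hκ | hκ
  · rw [Nat.sub_eq_zero_of_le hκ.le, zero_mul]
    exact Nat.zero_le _
  · rw [show κ + 3 = κ - 2 + 5 by omega, ← gauss]
    omega

lemma MT_towerGraph_ge (hκ : 2 ≤ κ) :
    (κ - 2) * (κ + 3) ≤ 4 * MT (towerGraph κ) (strictMaj (towerGraph κ)) := by
  obtain ⟨S, hS, hcard⟩ :=
    exists_isTS_card_eq_MT (G := towerGraph κ) (τ := strictMaj (towerGraph κ))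
  exact hcard ▸ card_le_of_npStep_eq_univ (npStep_eq_univ_of_isTS hκ hS)

end LowerBound

section Activation

variable {A : Finset (towerV κ)}

lemma mem_npStep_of_lev_eq_zero {v : towerV κ} (h : lev v = 0) (hκ : 1 ≤ κ)
    (hA : levelSet κ 1 ⊆ A) : v ∈ npStep (towerGraph κ) (strictMaj (towerGraph κ)) A :=
  mem_npStep_of_subset (neighborFinset_of_lev_eq_zero h).ge hA
    (by rw [strictMaj_of_lev_eq_zero h hκ, card_levelSet le_rfl hκ])

lemma mem_npStep_of_lev_eq_one {v : towerV κ} (h : lev v = 1) (hκ : 2 ≤ κ)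
    (hA : levelSet κ 2 ⊆ A) {b : Fin 2} (hb : leaf κ b ∈ A) :
    v ∈ npStep (towerGraph κ) (strictMaj (towerGraph κ)) A := by
  have hb' : leaf κ b ∉ levelSet κ 2 := by rw [mem_levelSet, lev_leaf]; decide
  refine mem_npStep_of_subset (X := cons (leaf κ b) (levelSet κ 2) hb') ?_
    (cons_subset.2 ⟨hb, hA⟩) ?_
  · rw [neighborFinset_of_lev_pos h.ge, h]
    exact cons_subset.2 ⟨mem_union_left _ (mem_levelSet.2 (lev_leaf b)), subset_union_right⟩
  · rw [strictMaj_of_lev_eq_one h hκ, card_cons, card_levelSet one_le_two hκ]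

lemma mem_npStep_of_lev_lt {v : towerV κ} (h2 : 2 ≤ lev v) (hκ : lev v < κ)
    (hA : levelSet κ (lev v + 1) ⊆ A) :
    v ∈ npStep (towerGraph κ) (strictMaj (towerGraph κ)) A :=
  mem_npStep_of_subset
    (by rw [neighborFinset_of_lev_pos (by omega)]; exact subset_union_right) hA
    (by rw [strictMaj_of_lev_lt h2 hκ, card_levelSet (by omega) hκ])

lemma mem_npStep_of_lev_eq {v : towerV κ} (h : lev v = κ) (hκ : 3 ≤ κ)
    (hA : levelSet κ (κ - 1) ⊆ A) :
    v ∈ npStep (towerGraph κ) (strictMaj (towerGraph κ)) A :=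
  mem_npStep_of_subset
    (by rw [neighborFinset_of_lev_pos (by omega), h]; exact subset_union_left) hA
    (by rw [strictMaj_of_lev_eq h (by omega), card_levelSet (by omega) (by omega)]; omega)

def levelsFrom (κ m : ℕ) : Finset (towerV κ) := univ.filter (m ≤ lev ·)

@[simp]
lemma mem_levelsFrom {v : towerV κ} {m : ℕ} : v ∈ levelsFrom κ m ↔ m ≤ lev v := by
  simp [levelsFrom]

lemma levelsFrom_anti {m m' : ℕ} (h : m ≤ m') : levelsFrom κ m' ⊆ levelsFrom κ m :=
  fun _ hv => mem_levelsFrom.2 (h.trans (mem_levelsFrom.1 hv))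

lemma levelSet_subset_levelsFrom {j m : ℕ} (h : m ≤ j) : levelSet κ j ⊆ levelsFrom κ m :=
  fun _ hv => mem_levelsFrom.2 ((mem_levelSet.1 hv).symm ▸ h)

lemma levelsFrom_subset_npStep {m : ℕ} (hm : 2 ≤ m) (hmκ : m + 2 ≤ κ)
    (hA : levelsFrom κ (m + 1) ⊆ A) :
    levelsFrom κ m ⊆ npStep (towerGraph κ) (strictMaj (towerGraph κ)) A := by
  intro v hv
  rw [mem_levelsFrom] at hv
  rcases (lev_le v).lt_or_eq with hlt | heq
  · exact mem_npStep_of_lev_lt (by omega) hlt ((levelSet_subset_levelsFrom (by omega)).trans hA)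
  · exact mem_npStep_of_lev_eq heq (by omega) ((levelSet_subset_levelsFrom (by omega)).trans hA)

lemma levelsFrom_one_subset_npStep (hκ : 4 ≤ κ) (hA : levelsFrom κ 2 ⊆ A) {b : Fin 2}
    (hb : leaf κ b ∈ A) :
    levelsFrom κ 1 ⊆ npStep (towerGraph κ) (strictMaj (towerGraph κ)) A := by
  intro v hv
  rw [mem_levelsFrom] at hv
  rcases hv.eq_or_lt with h1 | h2
  · exact mem_npStep_of_lev_eq_one h1.symm (by omega)
      ((levelSet_subset_levelsFrom le_rfl).trans hA) hb
  · exact levelsFrom_subset_npStep le_rfl hκ ((levelsFrom_anti (by omega)).trans hA)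
      (mem_levelsFrom.2 h2)

lemma npStep_eq_univ_of_levelsFrom_one_subset (hκ : 4 ≤ κ) (hA : levelsFrom κ 1 ⊆ A)
    {b : Fin 2} (hb : leaf κ b ∈ A) :
    npStep (towerGraph κ) (strictMaj (towerGraph κ)) A = univ := by
  refine eq_univ_of_forall fun v => ?_
  rcases Nat.eq_zero_or_pos (lev v) with h0 | hpos
  · exact mem_npStep_of_lev_eq_zero h0 (by omega) ((levelSet_subset_levelsFrom le_rfl).trans hA)
  · exact levelsFrom_one_subset_npStep hκ ((levelsFrom_anti (by omega)).trans hA) hb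
      (mem_levelsFrom.2 hpos)

end Activation

section Schedule

-- Vertices that are never targeted get time `κ + 3`, past the horizon `κ + 2`.
def targetTime (κ : ℕ) : towerV κ → ℕ
  | Sum.inr b => κ + b
  | v => if lev v = κ then 0 else if lev v + 1 = κ then 2 else κ + 3

lemma targetTime_of_lev_eq {v : towerV κ} (h : lev v = κ) (hκ : 1 ≤ κ) :
    targetTime κ v = 0 := by
  rcases v with _ | b
  · exact if_pos h
  · exact absurd h (by change 0 ≠ κ; omega)

lemma targetTime_of_lev_eq_pred {v : towerV κ} (h : lev v + 1 = κ) (hκ : 2 ≤ κ) :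
    targetTime κ v = 2 := by
  rcases v with _ | b
  · exact (if_neg (by omega)).trans (if_pos h)
  · exact absurd h (by change 1 ≠ κ; omega)

lemma targetTime_leaf (b : Fin 2) : targetTime κ (leaf κ b) = κ + b := rfl

lemma targetTime_ne (hκ : 1 ≤ κ) (v : towerV κ) : targetTime κ v ≠ κ + 2 := by
  rcases v with _ | b
  · dsimp only [targetTime]
    split_ifs <;> omega
  · change κ + (b : ℕ) ≠ κ + 2
    omega

lemma card_targetTime_le (hκ : 2 ≤ κ) :
    #(univ.filter (targetTime κ · ≤ κ + 2)) ≤ 2 * κ + 1 := by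
  have hsub : univ.filter (targetTime κ · ≤ κ + 2) ⊆
      levelSet κ κ ∪ levelSet κ (κ - 1) ∪ levelSet κ 0 := by
    intro v hv
    rw [mem_filter] at hv
    simp only [mem_union, mem_levelSet]
    rcases v with _ | b
    · dsimp only [targetTime] at hv
      split_ifs at hv <;> omega
    · exact Or.inr rfl
  calc _ ≤ #(levelSet κ κ) + #(levelSet κ (κ - 1)) + #(levelSet κ 0) :=
        (card_le_card hsub).trans
          ((card_union_le _ _).trans (Nat.add_le_add_right (card_union_le _ _) _))
    _ = 2 * κ + 1 := by
        rw [card_levelSet (by omega) le_rfl, card_levelSet (by omega) (by omega),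
          card_levelSet_zero]
        omega

local notation "𝒮" => timeSchedule (targetTime κ)
local notation "𝒬" =>
  Qseq (towerGraph κ) (strictMaj (towerGraph κ)) (timeSchedule (targetTime κ))

lemma levelsFrom_pred_subset_schedule_two (hκ : 3 ≤ κ) :
    levelsFrom κ (κ - 1) ⊆ 𝒮 2 ∪ 𝒬 2 := by
  have hQ₁ : levelSet κ (κ - 1) ⊆ 𝒬 1 := fun v hv => by
    rw [mem_levelSet] at hv
    refine mem_npStep_of_lev_lt (by omega) (by omega) fun u hu => mem_union_left _ ?_
    rw [mem_levelSet] at hu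
    exact mem_timeSchedule.2 (targetTime_of_lev_eq (by omega) (by omega))
  intro v hv
  rw [mem_levelsFrom] at hv
  rcases (lev_le v).lt_or_eq with hlt | heq
  · exact mem_union_left _ (mem_timeSchedule.2 (targetTime_of_lev_eq_pred (by omega) (by omega)))
  · exact mem_union_right _ (mem_npStep_of_lev_eq heq hκ (hQ₁.trans subset_union_right))

lemma levelsFrom_subset_schedule {i : ℕ} (hκ : 4 ≤ κ) (hi : 2 ≤ i) :
    levelsFrom κ (max (κ + 1 - i) 2) ⊆ 𝒮 i ∪ 𝒬 i := by
  induction i, hi using Nat.le_induction with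
  | base => simpa [show κ + 1 - 2 = κ - 1 by omega, show 2 ≤ κ - 1 by omega]
      using levelsFrom_pred_subset_schedule_two (by omega)
  | succ i hi ih =>
    refine (levelsFrom_subset_npStep (le_max_right _ 2) (by omega) ?_).trans subset_union_right
    exact (levelsFrom_anti (by omega)).trans ih

lemma Qseq_schedule_eq_univ (hκ : 4 ≤ κ) : 𝒬 (κ + 2) = univ := by
  have hκ₁ : levelsFrom κ 1 ⊆ 𝒬 (κ + 1) := by
    refine levelsFrom_one_subset_npStep (b := 0) hκ ?_ (mem_union_left _ ?_)
    · simpa [show κ + 1 - κ = 1 by omega]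
        using levelsFrom_subset_schedule hκ (i := κ) (by omega)
    · exact mem_timeSchedule.2 (targetTime_leaf 0)
  exact npStep_eq_univ_of_levelsFrom_one_subset (b := 1) hκ (hκ₁.trans subset_union_right)
    (mem_union_left _ (mem_timeSchedule.2 (targetTime_leaf 1)))

lemma isDTTS_schedule (hκ : 4 ≤ κ) :
    IsDTTS (towerGraph κ) (strictMaj (towerGraph κ)) 𝒮 (κ + 2) :=
  ⟨⟨eq_empty_of_forall_notMem fun v hv => targetTime_ne (by omega) v (mem_timeSchedule.1 hv),
    Qseq_schedule_eq_univ hκ⟩, fun _ _ _ _ hij => disjoint_timeSchedule _ hij⟩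

lemma MDTT_towerGraph_le (hκ : 4 ≤ κ) :
    MDTT (towerGraph κ) (strictMaj (towerGraph κ)) ≤ 2 * κ + 1 :=
  (MDTT_le (isDTTS_schedule hκ)).trans
    ((ttsSize_timeSchedule _ _).trans_le (card_targetTime_le (by omega)))

end Schedule

lemma mul_MDTT_le_MT {n : ℕ} (hκ : 8 * n + 4 ≤ κ) :
    n * MDTT (towerGraph κ) (strictMaj (towerGraph κ))
      ≤ MT (towerGraph κ) (strictMaj (towerGraph κ)) := by
  have hD := MDTT_towerGraph_le (by omega : 4 ≤ κ)
  have hM := MT_towerGraph_ge (by omega : 2 ≤ κ)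
  obtain ⟨m, rfl⟩ := Nat.exists_eq_add_of_le' (by omega : 2 ≤ κ)
  rw [Nat.add_sub_cancel] at hM
  nlinarith [Nat.mul_le_mul_left n hD]

end Tower

/-- Theorem 1: There are arbitrarily large graphs (the tower graphs `G_κ`,
whose number of nodes grows with `κ`) with strict majority thresholds for which the
minimum ordinary target set size is `ω` of the minimum disjoint timed target set size:
for every constant `C` the former eventually exceeds `C` times the latter. -/
theorem stmt10 :
    (∀ κ : ℕ, κ ≤ Fintype.card (towerV κ)) ∧
    ∀ C : ℝ, ∃ κ₀ : ℕ, ∀ κ : ℕ, κ₀ ≤ κ →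
      C * (MDTT (towerGraph κ) (strictMaj (towerGraph κ)) : ℝ)
        ≤ (MT (towerGraph κ) (strictMaj (towerGraph κ)) : ℝ) := by
  refine ⟨fun κ => ?_, fun C => ⟨8 * ⌈C⌉₊ + 4, fun κ hκ => ?_⟩⟩
  · simpa only [Fintype.card_fin] using Fintype.card_le_of_injective (β := towerV κ)
      (fun i : Fin κ => Sum.inl ⟨i, 0⟩)
      fun i j h => (Sigma.mk.inj_iff.1 (Sum.inl_injective h)).1
  · calc C * (MDTT (towerGraph κ) (strictMaj (towerGraph κ)) : ℝ)
        ≤ ⌈C⌉₊ * (MDTT (towerGraph κ) (strictMaj (towerGraph κ)) : ℝ) := by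
          gcongr
          exact Nat.le_ceil C
      _ ≤ MT (towerGraph κ) (strictMaj (towerGraph κ)) := by
          exact_mod_cast Tower.mul_MDTT_le_MT hκ
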